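/- Let G be a group generated by a finite set S, and suppose there exists a subset X ⊆ G with dens_S(X) = 0 such that sup{ |C_G(g) ∩ B_S(n)| / |B_S(n)| : g ∈ G ∖ X } → 0 as n → ∞. Then dc_S(G) = 0. -/

import Mathlib

open Filter

/-- The ball of radius `n` in the Cayley graph of `G` with respect to the
(symmetrized) generating set `S`. -/
def ball {G : Type*} [Group G] (S : Set G) (n : ℕ) : Set G :=
  {g | ∃ w : List G, w.length ≤ n ∧ (∀ x ∈ w, x ∈ S ∨ x⁻¹ ∈ S) ∧ w.prod = g}

/-!
Count commuting pairs `(g, h)` in the ball `B_n` by their first coordinate. The pairs with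
`g ∈ X` number at most `|X ∩ B_n| |B_n|`, and for each `g ∉ X` there are `|C_G(g) ∩ B_n|` choices
of `h`, at most `|B_n|` times the supremum in the hypothesis. Dividing by `|B_n|²`, the ratio is
bounded by the density of `X` in `B_n` plus that supremum, and both tend to `0`.
-/

section Ball

variable {G : Type*} [Group G]

lemma one_mem_ball (S : Set G) (n : ℕ) : (1 : G) ∈ ball S n :=
  ⟨[], by simp, by simp, by simp⟩

lemma ball_finite {S : Set G} (hS : S.Finite) (n : ℕ) : (ball S n).Finite := by
  let T : Set G := {x | x ∈ S ∨ x⁻¹ ∈ S}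
  have : Finite T := (hS.union hS.inv).to_subtype
  have hsub :
      ball S n ⊆ (fun l : List T => (l.map Subtype.val).prod) '' {l | l.length ≤ n} := by
    rintro g ⟨w, hlen, hmem, rfl⟩
    exact ⟨w.attachWith (· ∈ T) hmem, by simpa using hlen, by simp⟩
  exact ((List.finite_length_le _ n).image _).subset hsub

end Ball

lemma ncard_relatedPairs_le {α : Type*} {B : Set α} (hB : B.Finite) (r : α → α → Prop)
    (X : Set α) (c : ℝ) (hc : ∀ g ∈ B \ X, ({h ∈ B | r g h}.ncard : ℝ) ≤ c) :
    ({p : α × α | p.1 ∈ B ∧ p.2 ∈ B ∧ r p.1 p.2}.ncard : ℝ)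
      ≤ (X ∩ B).ncard * B.ncard + (B \ X).ncard * c := by
  classical
  obtain ⟨F, rfl⟩ := hB.exists_finset_coe
  have hpairs : {p : α × α | p.1 ∈ (F : Set α) ∧ p.2 ∈ (F : Set α) ∧ r p.1 p.2}
      = ↑((F ×ˢ F).filter fun p => r p.1 p.2) := by
    ext p; simp [and_assoc]
  have hfibre : ∀ g, {h ∈ (F : Set α) | r g h} = ↑(F.filter (r g)) := fun g => by
    ext h; simp
  have hX : X ∩ F = ↑(F.filter (· ∈ X)) := by ext g; simp [and_comm]
  have hnX : (F : Set α) \ X = ↑(F.filter (· ∉ X)) := by ext g; simp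
  have hcount :
      ((F ×ˢ F).filter fun p => r p.1 p.2).card = ∑ g ∈ F, (F.filter (r g)).card := by
    simp only [Finset.card_filter, Finset.sum_product]
  have hc' : ∀ g ∈ F.filter (· ∉ X), ((F.filter (r g)).card : ℝ) ≤ c := fun g hg => by
    simpa only [hfibre, Set.ncard_coe_finset] using hc g (by simpa [hnX] using hg)
  simp only [hpairs, hX, hnX, Set.ncard_coe_finset, hcount, Nat.cast_sum]
  rw [← Finset.sum_filter_add_sum_filter_not F (· ∈ X)]
  gcongr
  · rw [← nsmul_eq_mul]
    exact Finset.sum_le_card_nsmul _ _ _ fun g _ => by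
      exact_mod_cast Finset.card_filter_le F (r g)
  · rw [← nsmul_eq_mul]
    exact Finset.sum_le_card_nsmul _ _ _ hc'

lemma ncard_inter_div_ncard_le_one {α : Type*} {B : Set α} (hB : B.Finite) (A : Set α) :
    ((A ∩ B).ncard : ℝ) / B.ncard ≤ 1 :=
  div_le_one_of_le₀ (by exact_mod_cast Set.ncard_le_ncard Set.inter_subset_right hB)
    (Nat.cast_nonneg _)

lemma ncard_commutingPairs_div_sq_le {G : Type*} [Group G] {B : Set G} (hB : B.Finite)
    (hB₀ : B.Nonempty) (X : Set G) :
    ({p : G × G | p.1 ∈ B ∧ p.2 ∈ B ∧ p.1 * p.2 = p.2 * p.1}.ncard : ℝ) /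
        (B.ncard : ℝ) ^ 2 ≤ ((X ∩ B).ncard : ℝ) / B.ncard +
        ⨆ g : {g : G // g ∉ X},
          (((Subgroup.centralizer {(g : G)} : Set G) ∩ B).ncard : ℝ) / B.ncard := by
  set k : ℝ := (B.ncard : ℝ)
  set b := ⨆ g : {g : G // g ∉ X},
    (((Subgroup.centralizer {(g : G)} : Set G) ∩ B).ncard : ℝ) / k
  have hk : 0 < k := Nat.cast_pos.2 ((Set.ncard_pos hB).2 hB₀)
  have hb : 0 ≤ b := Real.iSup_nonneg fun _ => by positivity
  have hcentralizer : ∀ g ∈ B \ X, ({h ∈ B | g * h = h * g}.ncard : ℝ) ≤ b * k := by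
    intro g hg
    have hset : {h ∈ B | g * h = h * g} = (Subgroup.centralizer {g} : Set G) ∩ B := by
      ext h
      simp [Subgroup.mem_centralizer_singleton_iff, eq_comm, and_comm]
    rw [hset, ← div_le_iff₀ hk]
    exact le_ciSup (f := fun g : {g : G // g ∉ X} =>
        (((Subgroup.centralizer {(g : G)} : Set G) ∩ B).ncard : ℝ) / k)
      ⟨1, Set.forall_mem_range.2 fun _ => ncard_inter_div_ncard_le_one hB _⟩ ⟨g, hg.2⟩
  have hpairs := ncard_relatedPairs_le hB (fun g h => g * h = h * g) X _ hcentralizer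
  have hcompl : ((B \ X).ncard : ℝ) ≤ k :=
    Nat.cast_le.2 (Set.ncard_le_ncard Set.sdiff_subset hB)
  rw [div_le_iff₀ (by positivity)]
  calc _ ≤ ((X ∩ B).ncard : ℝ) * k + (B \ X).ncard * (b * k) := hpairs
    _ ≤ ((X ∩ B).ncard : ℝ) * k + k * (b * k) := by gcongr
    _ = (((X ∩ B).ncard : ℝ) / k + b) * k ^ 2 := by field_simp

lemma tendsto_zero_of_limsup_eq_zero {ι : Type*} {l : Filter ι} [l.NeBot] {u : ι → ℝ}
    (h₀ : ∀ i, 0 ≤ u i) (hbdd : IsBoundedUnder (· ≤ ·) l u) (hlimsup : limsup u l = 0) :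
    Tendsto u l (nhds 0) := by
  have hbdd₀ : IsBoundedUnder (· ≥ ·) l u := isBoundedUnder_of ⟨0, h₀⟩
  exact tendsto_of_le_liminf_of_limsup_le (le_liminf_of_le hbdd.isCoboundedUnder_ge
    (Eventually.of_forall h₀)) hlimsup.le hbdd hbdd₀

theorem stmt14_general {G : Type*} [Group G] (S : Finset G)
    (X : Set G)
    (hdens : limsup (fun n : ℕ =>
      ((X ∩ ball (S : Set G) n).ncard : ℝ) / ((ball (S : Set G) n).ncard : ℝ))
      atTop = 0)
    (hsup : Tendsto (fun n : ℕ =>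
      ⨆ g : {g : G // g ∉ X},
        (((Subgroup.centralizer {(g : G)} : Set G) ∩ ball (S : Set G) n).ncard : ℝ) /
          ((ball (S : Set G) n).ncard : ℝ))
      atTop (nhds 0)) :
    limsup (fun n : ℕ =>
      (({p : G × G | p.1 ∈ ball (S : Set G) n ∧ p.2 ∈ ball (S : Set G) n ∧
          p.1 * p.2 = p.2 * p.1}).ncard : ℝ) /
        ((ball (S : Set G) n).ncard : ℝ) ^ 2)
      atTop = 0 := by
  have hfinite : ∀ n, (ball (S : Set G) n).Finite := ball_finite S.finite_toSet
  have hdensity := tendsto_zero_of_limsup_eq_zero (fun _ => by positivity)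
    (isBoundedUnder_of ⟨1, fun n => ncard_inter_div_ncard_le_one (hfinite n) X⟩) hdens
  have hbound := hdensity.add hsup
  rw [add_zero] at hbound
  refine (squeeze_zero (fun _ => by positivity) (fun n => ?_) hbound).limsup_eq
  exact ncard_commutingPairs_div_sq_le (hfinite n) ⟨1, one_mem_ball _ n⟩ X

/-- If `X ⊆ G` has density `0` with respect to `S`, and the normalized sizes
of centralizers of elements outside `X` tend uniformly to `0`, then the degree
of commutativity `dc_S(G)` is `0`. -/
theorem stmt14 {G : Type*} [Group G] (S : Finset G)
    (hSgen : Subgroup.closure (S : Set G) = ⊤)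
    (X : Set G)
    (hdens : limsup (fun n : ℕ =>
      ((X ∩ ball (S : Set G) n).ncard : ℝ) / ((ball (S : Set G) n).ncard : ℝ))
      atTop = 0)
    (hsup : Tendsto (fun n : ℕ =>
      ⨆ g : {g : G // g ∉ X},
        (((Subgroup.centralizer {(g : G)} : Set G) ∩ ball (S : Set G) n).ncard : ℝ) /
          ((ball (S : Set G) n).ncard : ℝ))
      atTop (nhds 0)) :
    limsup (fun n : ℕ =>
      (({p : G × G | p.1 ∈ ball (S : Set G) n ∧ p.2 ∈ ball (S : Set G) n ∧
          p.1 * p.2 = p.2 * p.1}).ncard : ℝ) /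
        ((ball (S : Set G) n).ncard : ℝ) ^ 2)
      atTop = 0 :=
  stmt14_general S X hdens hsup
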